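/- For every integer n ≥ 1 and every n-chain x such that s(x) and s(s(x)) are both n-chains, the function s(s(s(x))) is an n-chain if and only if n ≥ 4. -/
import Mathlib


/-- The counting operator: `countOp n x j` is the number of indices `i` with `x i = j`. -/
def countOp (n : ℕ) (x : Fin n → ℕ) : Fin n → ℕ :=
  fun j => (Finset.univ.filter fun i => x i = (j : ℕ)).card

lemma sum_countOp (n : ℕ) (x : Fin n → ℕ) (hx : ∀ i, x i < n) :
    ∑ j : Fin n, countOp n x j = n := by
  have h := Finset.card_eq_sum_card_fiberwise
    (f := x) (s := Finset.univ) (t := Finset.range n)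
    (fun i _ => Finset.mem_range.mpr (hx i))
  rw [Finset.card_univ, Fintype.card_fin] at h
  unfold countOp
  rw [Fin.sum_univ_eq_sum_range (fun m => (Finset.univ.filter fun i => x i = m).card) n]
  exact h.symm

lemma weighted_sum_countOp (n : ℕ) (x : Fin n → ℕ) (hx : ∀ i, x i < n) :
    ∑ j : Fin n, (j : ℕ) * countOp n x j = ∑ i, x i := by
  unfold countOp
  rw [Fin.sum_univ_eq_sum_range
    (fun m => m * (Finset.univ.filter fun i => x i = m).card) n]
  rw [← Finset.sum_fiberwise_of_maps_to
    (g := x) (f := x) (t := Finset.range n)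
    (fun i _ => Finset.mem_range.mpr (hx i))]
  refine Finset.sum_congr rfl (fun b _ => ?_)
  rw [Finset.sum_congr rfl (fun i hi => (Finset.mem_filter.mp hi).2)]
  rw [Finset.sum_const, smul_eq_mul, mul_comm]

theorem countOp_third_iterate_isChain_iff (n : ℕ) (hn : 1 ≤ n) (x : Fin n → ℕ)
    (hx : ∀ i, x i < n) (hsx : ∀ j, countOp n x j < n)
    (hssx : ∀ j, countOp n (countOp n x) j < n) :
    (∀ j, countOp n (countOp n (countOp n x)) j < n) ↔ 4 ≤ n := by
  set y := countOp n x with hy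
  set z := countOp n y with hz
  have hsumy : ∑ j : Fin n, y j = n := sum_countOp n x hx
  have hsumz : ∑ j : Fin n, z j = n := sum_countOp n y hsx
  have hwz : ∑ j : Fin n, (j : ℕ) * z j = ∑ j, y j := weighted_sum_countOp n y hsx
  rw [hsumy] at hwz
  constructor
  · intro h
    by_contra hlt
    push_neg at hlt
    interval_cases n
    · -- n = 1
      have h0 := hssx 0
      rw [Fin.sum_univ_one] at hsumz
      omega
    · -- n = 2
      have h1 := hssx 1
      rw [Fin.sum_univ_two] at hsumz
      rw [Fin.sum_univ_two] at hwz
      simp only [Fin.val_zero, Fin.val_one, zero_mul, one_mul, zero_add] at hwz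
      omega
    · -- n = 3
      have h0 := hssx 0
      have h1 := hssx 1
      have h2 := hssx 2
      rw [Fin.sum_univ_three] at hsumz hwz
      simp only [Fin.val_zero, Fin.val_one, Fin.val_two, zero_mul, one_mul,
        zero_add] at hwz
      have e : z 0 = 1 ∧ z 1 = 1 ∧ z 2 = 1 := by omega
      have hz1 : ∀ k : Fin 3, z k = 1 := by
        intro k
        fin_cases k
        · exact e.1
        · exact e.2.1
        · exact e.2.2
      have hcount : countOp 3 z 1 = 3 := by
        unfold countOp
        rw [Finset.filter_true_of_mem (fun k _ => by rw [hz1 k]; rfl)]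
        simp
      have := h 1
      omega
  · intro h4 j
    have hle : countOp n z j ≤ n := by
      unfold countOp
      calc (Finset.univ.filter fun i => z i = (j : ℕ)).card
          ≤ Finset.univ.card := Finset.card_filter_le _ _
        _ = n := by rw [Finset.card_univ, Fintype.card_fin]
    rcases lt_or_eq_of_le hle with h | h
    · exact h
    · exfalso
      have huniv : (Finset.univ.filter fun i => z i = (j : ℕ)) = Finset.univ := by
        apply Finset.eq_univ_of_card
        unfold countOp at h
        rw [h, Fintype.card_fin]
      have hall : ∀ k : Fin n, z k = (j : ℕ) := by
        intro k
        have := huniv ▸ Finset.mem_univ k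
        exact (Finset.mem_filter.mp this).2
      have hsum : n * (j : ℕ) = n := by
        have e : ∑ k : Fin n, z k = n * (j : ℕ) := by
          rw [Finset.sum_congr rfl (fun k _ => hall k), Finset.sum_const,
            smul_eq_mul, Finset.card_univ, Fintype.card_fin]
        exact e.symm.trans hsumz
      have hj1 : (j : ℕ) = 1 :=
        Nat.eq_of_mul_eq_mul_left (by omega : 0 < n) (by rw [mul_one]; exact hsum)
      have hsumj : ∑ k : Fin n, (k : ℕ) = n := by
        have e : ∑ k : Fin n, (k : ℕ) * z k = ∑ k : Fin n, (k : ℕ) :=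
          Finset.sum_congr rfl (fun k _ => by rw [hall k, hj1, mul_one])
        exact e.symm.trans hwz
      have hgauss : (∑ k : Fin n, (k : ℕ)) * 2 = n * (n - 1) := by
        rw [Fin.sum_univ_eq_sum_range (fun m => m) n]
        exact Finset.sum_range_id_mul_two n
      rw [hsumj] at hgauss
      have ht : n - 1 + 1 = n := by omega
      have ht3 : 3 ≤ n - 1 := by omega
      nlinarith [hgauss, ht, ht3]
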